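/- arXiv:2103.11821 — 2 statements merged into one kernel-verified Lean document; each statement's English description precedes it below -/
import Mathlib

section
/- If time t is an i-node of order m−t for x_{1:m} (with 1 ≤ t < m), then for every n ≥ m and every continuation x_{m+1:n} of the observations, t is an i-node of order n−t for x_{1:n}; that is, δ_t(i)·p_{ij}(x_{t:n}) ≥ δ_t(k)·p_{kj}(x_{t:n}) for all j,k ∈ 𝒴. -/
open scoped BigOperators

namespace PMMViterbi

variable {𝒳 𝒴 : Type*} [Fintype 𝒴] [Nonempty 𝒴]

/-- Product of transition weights `∏_{k=t+1}^{n} q(x_k, y_k | x_{k-1}, y_{k-1})`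
along the path `y`, for observations `x` (sequences are indexed starting from 1). -/
noncomputable def prodQ (q : 𝒳 × 𝒴 → 𝒳 × 𝒴 → ℝ) (x : ℕ → 𝒳) (y : ℕ → 𝒴) (t n : ℕ) : ℝ :=
  ∏ k ∈ Finset.Ioc t n, q (x k, y k) (x (k - 1), y (k - 1))

/-- `p(x_{1:n}, y_{1:n}) = p₁(x₁,y₁) · ∏_{k=2}^n q(x_k,y_k|x_{k-1},y_{k-1})`. -/
noncomputable def pJoint (q : 𝒳 × 𝒴 → 𝒳 × 𝒴 → ℝ) (p1 : 𝒳 × 𝒴 → ℝ)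
    (x : ℕ → 𝒳) (y : ℕ → 𝒴) (n : ℕ) : ℝ :=
  p1 (x 1, y 1) * prodQ q x y 1 n

/-- `δ_t(i)`: the maximum of `p(x_{1:t}, y_{1:t})` over paths with `y_t = i`. -/
noncomputable def delta (q : 𝒳 × 𝒴 → 𝒳 × 𝒴 → ℝ) (p1 : 𝒳 × 𝒴 → ℝ)
    (x : ℕ → 𝒳) (t : ℕ) (i : 𝒴) : ℝ :=
  ⨆ (y : ℕ → 𝒴) (_ : y t = i), pJoint q p1 x y t

/-- `p_{ij}(x_{t:n})`: the maximum of `∏_{k=t+1}^n q(x_k,y_k|x_{k-1},y_{k-1})`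
over paths with `y_t = i` and `y_n = j`. -/
noncomputable def pTrans (q : 𝒳 × 𝒴 → 𝒳 × 𝒴 → ℝ) (x : ℕ → 𝒳) (t n : ℕ) (i j : 𝒴) : ℝ :=
  ⨆ (y : ℕ → 𝒴) (_ : y t = i ∧ y n = j), prodQ q x y t n

/-- Time `t` is an `i`-node of order `m - t` for `x_{1:m}`. -/
def IsNode (q : 𝒳 × 𝒴 → 𝒳 × 𝒴 → ℝ) (p1 : 𝒳 × 𝒴 → ℝ)
    (x : ℕ → 𝒳) (t m : ℕ) (i : 𝒴) : Prop :=
  ∀ j k : 𝒴, delta q p1 x t k * pTrans q x t m k j ≤ delta q p1 x t i * pTrans q x t m i j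

/-- Time `t` is a strong `i`-node of order `m - t` for `x_{1:m}`. -/
def IsStrongNode (q : 𝒳 × 𝒴 → 𝒳 × 𝒴 → ℝ) (p1 : 𝒳 × 𝒴 → ℝ)
    (x : ℕ → 𝒳) (t m : ℕ) (i : 𝒴) : Prop :=
  IsNode q p1 x t m i ∧
    ∀ j k : 𝒴, k ≠ i → 0 < delta q p1 x t i * pTrans q x t m i j →
      delta q p1 x t k * pTrans q x t m k j < delta q p1 x t i * pTrans q x t m i j

/-- `v` is a Viterbi path of `x_{1:n}`: it maximizes `y ↦ p(x_{1:n}, y_{1:n})`. -/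
def IsViterbi (q : 𝒳 × 𝒴 → 𝒳 × 𝒴 → ℝ) (p1 : 𝒳 × 𝒴 → ℝ)
    (x : ℕ → 𝒳) (n : ℕ) (v : ℕ → 𝒴) : Prop :=
  ∀ y : ℕ → 𝒴, pJoint q p1 x y n ≤ pJoint q p1 x v n

/-- `v` is an infinite Viterbi path of `x_{1:∞}`: for every `t ≥ 1` there is `m ≥ t`
such that for every `n ≥ m` some Viterbi path of `x_{1:n}` agrees with `v`
on coordinates `1, …, t`. -/
def IsInfViterbi (q : 𝒳 × 𝒴 → 𝒳 × 𝒴 → ℝ) (p1 : 𝒳 × 𝒴 → ℝ)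
    (x : ℕ → 𝒳) (v : ℕ → 𝒴) : Prop :=
  ∀ t : ℕ, 1 ≤ t → ∃ m : ℕ, t ≤ m ∧ ∀ n : ℕ, m ≤ n →
    ∃ w : ℕ → 𝒴, IsViterbi q p1 x n w ∧ ∀ s : ℕ, 1 ≤ s → s ≤ t → w s = v s

lemma prodQ_nonneg (q : 𝒳 × 𝒴 → 𝒳 × 𝒴 → ℝ) (hq : ∀ z z' : 𝒳 × 𝒴, 0 ≤ q z z')
    (x : ℕ → 𝒳) (y : ℕ → 𝒴) (t n : ℕ) : 0 ≤ prodQ q x y t n :=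
  Finset.prod_nonneg fun _ _ => hq _ _

lemma prodQ_congr (q : 𝒳 × 𝒴 → 𝒳 × 𝒴 → ℝ) {x x' : ℕ → 𝒳} {y y' : ℕ → 𝒴} {t n : ℕ}
    (hx : ∀ s, t ≤ s → s ≤ n → x s = x' s) (hy : ∀ s, t ≤ s → s ≤ n → y s = y' s) :
    prodQ q x y t n = prodQ q x' y' t n := by
  unfold prodQ
  apply Finset.prod_congr rfl
  intro k hk
  simp only [Finset.mem_Ioc] at hk
  rw [hx k (by omega) hk.2, hx (k-1) (by omega) (by omega),
    hy k (by omega) hk.2, hy (k-1) (by omega) (by omega)]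

lemma prodQ_split (q : 𝒳 × 𝒴 → 𝒳 × 𝒴 → ℝ) (x : ℕ → 𝒳) (y : ℕ → 𝒴) {t m n : ℕ}
    (h1 : t ≤ m) (h2 : m ≤ n) :
    prodQ q x y t n = prodQ q x y t m * prodQ q x y m n :=
  (Finset.prod_Ioc_consecutive _ h1 h2).symm

lemma range_finite_of_depends (f : (ℕ → 𝒴) → ℝ) (s : Finset ℕ)
    (hdep : ∀ y y' : ℕ → 𝒴, (∀ k ∈ s, y k = y' k) → f y = f y') :
    (Set.range f).Finite := by
  classical
  have hsub : Set.range f ⊆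
      (fun g : ({k // k ∈ s} → 𝒴) =>
        f (fun k => if h : k ∈ s then g ⟨k, h⟩ else Classical.arbitrary 𝒴)) '' Set.univ := by
    rintro r ⟨y, rfl⟩
    exact ⟨fun k => y k, Set.mem_univ _, hdep _ _ (fun k hk => by simp [hk])⟩
  exact (Set.finite_univ.image _).subset hsub

lemma prodQ_range_finite (q : 𝒳 × 𝒴 → 𝒳 × 𝒴 → ℝ) (x : ℕ → 𝒳) (t n : ℕ) :
    (Set.range fun y : ℕ → 𝒴 => prodQ q x y t n).Finite := by
  apply range_finite_of_depends _ (Finset.Icc t n)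
  intro y y' hyy
  exact prodQ_congr q (fun _ _ _ => rfl)
    (fun s h1 h2 => hyy s (Finset.mem_Icc.mpr ⟨h1, h2⟩))

lemma pJoint_range_finite (q : 𝒳 × 𝒴 → 𝒳 × 𝒴 → ℝ) (p1 : 𝒳 × 𝒴 → ℝ) (x : ℕ → 𝒳) (n : ℕ) :
    (Set.range fun y : ℕ → 𝒴 => pJoint q p1 x y n).Finite := by
  apply range_finite_of_depends _ (Finset.Icc 0 (n + 1))
  intro y y' hyy
  unfold pJoint
  rw [hyy 1 (Finset.mem_Icc.mpr ⟨Nat.zero_le _, by omega⟩),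
    prodQ_congr q (x' := x) (fun _ _ _ => rfl)
      (fun s h1 h2 => hyy s (Finset.mem_Icc.mpr ⟨Nat.zero_le _, by omega⟩))]

/-- Attainment of the (conditional) supremum for nonnegative finite-range functions. -/
lemma attains (f : (ℕ → 𝒴) → ℝ) (hf : (Set.range f).Finite) (hf0 : ∀ z, 0 ≤ f z)
    (P : (ℕ → 𝒴) → Prop) (hP : ∃ y, P y) :
    ∃ y, P y ∧ (⨆ z, ⨆ _ : P z, f z) = f y ∧ ∀ z, P z → f z ≤ f y := by
  classical
  set g : (ℕ → 𝒴) → ℝ := fun z => ⨆ _ : P z, f z with hg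
  have hgval : ∀ z, g z = if P z then f z else 0 := by
    intro z
    by_cases h : P z
    · simp only [hg, if_pos h]
      exact ciSup_pos h
    · simp only [hg, if_neg h]
      haveI : IsEmpty (PLift (P z)) := ⟨fun hp => h hp.down⟩
      haveI : IsEmpty (P z) := ⟨fun hp => h hp⟩
      exact Real.iSup_of_isEmpty _
  have hgrange : (Set.range g).Finite := by
    apply (hf.union (Set.finite_singleton 0)).subset
    rintro r ⟨z, rfl⟩
    rw [hgval z]
    by_cases h : P z
    · exact Or.inl (by simp [h])
    · exact Or.inr (by simp [h])
  have hne : (Set.range g).Nonempty := Set.range_nonempty _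
  have hmem : sSup (Set.range g) ∈ Set.range g := hne.csSup_mem hgrange
  obtain ⟨y0, hy0⟩ := hmem
  have hub : ∀ z, g z ≤ g y0 := by
    intro z
    rw [hy0]
    exact le_csSup hgrange.bddAbove ⟨z, rfl⟩
  have hsup : (⨆ z, ⨆ _ : P z, f z) = g y0 := hy0.symm
  by_cases hPy0 : P y0
  · refine ⟨y0, hPy0, ?_, ?_⟩
    · rw [hsup, hgval y0, if_pos hPy0]
    · intro z hz
      have := hub z
      rwa [hgval z, if_pos hz, hgval y0, if_pos hPy0] at this
  · obtain ⟨y, hy⟩ := hP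
    have hgy0 : g y0 = 0 := by rw [hgval y0, if_neg hPy0]
    have hfy : f y = 0 := by
      have h1 := hub y
      rw [hgval y, if_pos hy, hgy0] at h1
      linarith [hf0 y]
    refine ⟨y, hy, by rw [hsup, hgy0, hfy], ?_⟩
    intro z hz
    have h1 := hub z
    rw [hgval z, if_pos hz, hgy0] at h1
    rw [hfy]
    exact h1

/-- a node stays a node for every continuation of the observations:
if `t` is an `i`-node of order `m - t` for `x_{1:m}`, then for every `n ≥ m` and every
sequence `x'` agreeing with `x` on coordinates `1, …, m` (a continuation of `x_{1:m}`),
`t` is an `i`-node of order `n - t` for `x'_{1:n}`. -/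
theorem isNode_of_continuation (q : 𝒳 × 𝒴 → 𝒳 × 𝒴 → ℝ) (p1 : 𝒳 × 𝒴 → ℝ)
    (hq : ∀ z z' : 𝒳 × 𝒴, 0 ≤ q z z') (hp1 : ∀ z : 𝒳 × 𝒴, 0 ≤ p1 z)
    (x : ℕ → 𝒳) (t m : ℕ) (ht : 1 ≤ t) (htm : t < m) (i : 𝒴)
    (hnode : IsNode q p1 x t m i) :
    ∀ x' : ℕ → 𝒳, (∀ k : ℕ, k ≤ m → x' k = x k) → ∀ n : ℕ, m ≤ n →
      ∀ j k : 𝒴, delta q p1 x' t k * pTrans q x' t n k j ≤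
        delta q p1 x' t i * pTrans q x' t n i j := by
  intro x' hx' n hn j k
  have hmn : t ≤ m := le_of_lt htm
  have htn : t < n := lt_of_lt_of_le htm hn
  -- delta only depends on x up to time t ≤ m, where x' = x
  have hdelta : ∀ l : 𝒴, delta q p1 x' t l = delta q p1 x t l := by
    intro l
    have hpj : ∀ y : ℕ → 𝒴, pJoint q p1 x' y t = pJoint q p1 x y t := by
      intro y
      unfold pJoint
      rw [hx' 1 (le_trans ht hmn),
        prodQ_congr q (fun s _ h2 => hx' s (le_trans h2 hmn)) (fun _ _ _ => rfl)]
    simp only [delta, hpj]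
  -- delta is nonnegative
  have hdnn : ∀ l : 𝒴, 0 ≤ delta q p1 x t l := by
    intro l
    obtain ⟨y, _, heq, -⟩ := attains (fun z => pJoint q p1 x z t)
      (pJoint_range_finite q p1 x t)
      (fun z => mul_nonneg (hp1 _) (prodQ_nonneg q hq _ _ _ _))
      (fun z => z t = l) ⟨fun _ => l, rfl⟩
    rw [delta, heq]
    exact mul_nonneg (hp1 _) (prodQ_nonneg q hq _ _ _ _)
  -- attain the supremum defining pTrans q x' t n k j
  obtain ⟨y, ⟨hyt, hyn⟩, hyeq, -⟩ := attains (fun z => prodQ q x' z t n)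
    (prodQ_range_finite q x' t n) (fun z => prodQ_nonneg q hq _ _ _ _)
    (fun z => z t = k ∧ z n = j)
    ⟨fun s => if s = n then j else k, by simp [Nat.ne_of_lt htn], by simp⟩
  set l : 𝒴 := y m with hl
  -- split the product at m and replace x' by x on [t,m]
  have hsplit : prodQ q x' y t n = prodQ q x y t m * prodQ q x' y m n := by
    rw [prodQ_split q x' y hmn hn]
    congr 1
    exact prodQ_congr q (fun s _ h2 => hx' s h2) (fun _ _ _ => rfl)
  -- prodQ q x y t m ≤ pTrans q x t m k l
  obtain ⟨y2, ⟨hy2t, hy2m⟩, hy2eq, hy2max⟩ := attains (fun z => prodQ q x z t m)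
    (prodQ_range_finite q x t m) (fun z => prodQ_nonneg q hq _ _ _ _)
    (fun z => z t = k ∧ z m = l) ⟨y, hyt, rfl⟩
  have h1 : prodQ q x y t m ≤ pTrans q x t m k l := by
    rw [pTrans, hy2eq]
    exact hy2max y ⟨hyt, rfl⟩
  -- attain pTrans q x t m i l by a path z
  obtain ⟨z, ⟨hzt, hzm⟩, hzeq, -⟩ := attains (fun z => prodQ q x z t m)
    (prodQ_range_finite q x t m) (fun z => prodQ_nonneg q hq _ _ _ _)
    (fun z => z t = i ∧ z m = l)
    ⟨fun s => if s = m then l else i, by simp [Nat.ne_of_lt htm], by simp⟩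
  -- glue z (up to m) with y (after m)
  set w : ℕ → 𝒴 := fun s => if s ≤ m then z s else y s with hw
  have hwt : w t = i := by simp [hw, hmn, hzt]
  have hwn : w n = j := by
    rcases eq_or_lt_of_le hn with h | h
    · simp only [hw]
      rw [if_pos (le_of_eq h.symm)]
      rw [← h] at hyn ⊢
      rw [hzm, hl, hyn]
    · simp [hw, Nat.not_le.mpr h, hyn]
  have hw1 : prodQ q x' w t m = prodQ q x z t m :=
    prodQ_congr q (fun s _ h2 => hx' s h2) (fun s _ h2 => if_pos h2)
  have hw2 : prodQ q x' w m n = prodQ q x' y m n := by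
    apply prodQ_congr q (fun _ _ _ => rfl)
    intro s h1' h2'
    simp only [hw]
    rcases eq_or_lt_of_le h1' with h | h
    · rw [if_pos (le_of_eq h.symm), ← h, hzm]
    · rw [if_neg (Nat.not_le.mpr h)]
  have hwprod : prodQ q x' w t n = prodQ q x z t m * prodQ q x' y m n := by
    rw [prodQ_split q x' w hmn hn, hw1, hw2]
  -- prodQ q x' w t n ≤ pTrans q x' t n i j
  obtain ⟨y3, _, hy3eq, hy3max⟩ := attains (fun z => prodQ q x' z t n)
    (prodQ_range_finite q x' t n) (fun z => prodQ_nonneg q hq _ _ _ _)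
    (fun z => z t = i ∧ z n = j) ⟨w, hwt, hwn⟩
  have h3 : prodQ q x' w t n ≤ pTrans q x' t n i j := by
    rw [pTrans, hy3eq]
    exact hy3max w ⟨hwt, hwn⟩
  -- put everything together
  have hmid : prodQ q x' y m n ≥ 0 := prodQ_nonneg q hq _ _ _ _
  calc delta q p1 x' t k * pTrans q x' t n k j
      = delta q p1 x t k * (prodQ q x y t m * prodQ q x' y m n) := by
        rw [hdelta k, pTrans, hyeq, hsplit]
    _ = (delta q p1 x t k * prodQ q x y t m) * prodQ q x' y m n := by ring
    _ ≤ (delta q p1 x t k * pTrans q x t m k l) * prodQ q x' y m n := by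
        apply mul_le_mul_of_nonneg_right _ hmid
        exact mul_le_mul_of_nonneg_left h1 (hdnn k)
    _ ≤ (delta q p1 x t i * pTrans q x t m i l) * prodQ q x' y m n :=
        mul_le_mul_of_nonneg_right (hnode l k) hmid
    _ = delta q p1 x t i * (prodQ q x z t m * prodQ q x' y m n) := by
        rw [pTrans, hzeq]; ring
    _ = delta q p1 x t i * prodQ q x' w t n := by rw [hwprod]
    _ ≤ delta q p1 x t i * pTrans q x' t n i j :=
        mul_le_mul_of_nonneg_left h3 (hdnn i)
    _ = delta q p1 x' t i * pTrans q x' t n i j := by rw [hdelta i]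

end PMMViterbi
end

section
/- Suppose 2 ≤ t and the observations x_{t−1}, x_t, x_{t+1} are such that there exists a state i ∈ 𝒴 with q(x_t,i|x_{t−1},y_{t−1})·q(x_{t+1},y_{t+1}|x_t,i) ≥ q(x_t,y_t|x_{t−1},y_{t−1})·q(x_{t+1},y_{t+1}|x_t,y_t) for every triple y_{t−1},y_t,y_{t+1} ∈ 𝒴. Then t is an i-node of order 1 for x_{1:t+1}, i.e. δ_t(i)·p_{ij}(x_{t:t+1}) ≥ δ_t(k)·p_{kj}(x_{t:t+1}) for all j,k ∈ 𝒴. -/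
open scoped BigOperators

namespace PMMViterbi

variable {𝒳 𝒴 : Type*} [Fintype 𝒴] [Nonempty 𝒴]

set_option linter.unusedSectionVars false in
lemma prodQ_single (q : 𝒳 × 𝒴 → 𝒳 × 𝒴 → ℝ) (x : ℕ → 𝒳) (y : ℕ → 𝒴) (t : ℕ) :
    prodQ q x y t (t + 1) = q (x (t + 1), y (t + 1)) (x t, y t) := by
  simp [prodQ, Nat.Ioc_succ_singleton]

lemma pTrans_succ (q : 𝒳 × 𝒴 → 𝒳 × 𝒴 → ℝ) (hq : ∀ z z' : 𝒳 × 𝒴, 0 ≤ q z z')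
    (x : ℕ → 𝒳) (t : ℕ) (a b : 𝒴) :
    pTrans q x t (t + 1) a b = q (x (t + 1), b) (x t, a) := by
  have hub : ∀ y : ℕ → 𝒴,
      (⨆ (_ : y t = a ∧ y (t + 1) = b), prodQ q x y t (t + 1)) ≤ q (x (t + 1), b) (x t, a) := by
    intro y
    by_cases h : y t = a ∧ y (t + 1) = b
    · rw [ciSup_pos h, prodQ_single, h.1, h.2]
    · haveI : IsEmpty (y t = a ∧ y (t + 1) = b) := ⟨h⟩
      rw [Real.iSup_of_isEmpty]
      exact hq _ _
  refine le_antisymm (Real.iSup_le hub (hq _ _)) ?_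
  set y₀ : ℕ → 𝒴 := fun s => if s = t + 1 then b else a with hy₀
  have h0 : y₀ t = a ∧ y₀ (t + 1) = b := by simp [hy₀]
  have : q (x (t + 1), b) (x t, a) =
      ⨆ (_ : y₀ t = a ∧ y₀ (t + 1) = b), prodQ q x y₀ t (t + 1) := by
    rw [ciSup_pos h0, prodQ_single, h0.1, h0.2]
  rw [this]
  exact le_ciSup ⟨q (x (t + 1), b) (x t, a), by rintro _ ⟨y, rfl⟩; exact hub y⟩ y₀

set_option linter.unusedSectionVars false in
lemma prodQ_congr_s3 (q : 𝒳 × 𝒴 → 𝒳 × 𝒴 → ℝ) (x : ℕ → 𝒳)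
    {y z : ℕ → 𝒴} {a n : ℕ} (h : ∀ s, s ≤ n → y s = z s) :
    prodQ q x y a n = prodQ q x z a n := by
  unfold prodQ
  refine Finset.prod_congr rfl fun m hm => ?_
  obtain ⟨h1, h2⟩ := Finset.mem_Ioc.mp hm
  rw [h m h2, h (m - 1) (le_trans (Nat.sub_le _ _) h2)]

set_option linter.unusedSectionVars false in
lemma pJoint_congr (q : 𝒳 × 𝒴 → 𝒳 × 𝒴 → ℝ) (p1 : 𝒳 × 𝒴 → ℝ) (x : ℕ → 𝒳)
    {y z : ℕ → 𝒴} {n : ℕ} (hn : 1 ≤ n) (h : ∀ s, s ≤ n → y s = z s) :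
    pJoint q p1 x y n = pJoint q p1 x z n := by
  unfold pJoint
  rw [h 1 hn, prodQ_congr_s3 q x h]

lemma pJoint_bdd (q : 𝒳 × 𝒴 → 𝒳 × 𝒴 → ℝ) (p1 : 𝒳 × 𝒴 → ℝ) (x : ℕ → 𝒳) {t : ℕ} (ht : 1 ≤ t) :
    BddAbove (Set.range fun y : ℕ → 𝒴 => pJoint q p1 x y t) := by
  have hsub : (Set.range fun y : ℕ → 𝒴 => pJoint q p1 x y t) ⊆
      Set.range (fun v : Fin (t + 1) → 𝒴 =>
        pJoint q p1 x (fun s => v ⟨min s t, by omega⟩) t) := by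
    rintro _ ⟨y, rfl⟩
    refine ⟨fun s => y s, ?_⟩
    exact pJoint_congr q p1 x ht fun s hs => by simp [Nat.min_eq_left hs]
  exact (Set.finite_range _).bddAbove.mono hsub

set_option linter.unusedSectionVars false in
lemma pJoint_nonneg (q : 𝒳 × 𝒴 → 𝒳 × 𝒴 → ℝ) (p1 : 𝒳 × 𝒴 → ℝ)
    (hq : ∀ z z' : 𝒳 × 𝒴, 0 ≤ q z z') (hp1 : ∀ z : 𝒳 × 𝒴, 0 ≤ p1 z)
    (x : ℕ → 𝒳) (y : ℕ → 𝒴) (n : ℕ) : 0 ≤ pJoint q p1 x y n :=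
  mul_nonneg (hp1 _) (Finset.prod_nonneg fun _ _ => hq _ _)

set_option linter.unusedSectionVars false in
lemma prodQ_split_top (q : 𝒳 × 𝒴 → 𝒳 × 𝒴 → ℝ) (x : ℕ → 𝒳) (z : ℕ → 𝒴) {t : ℕ} (ht : 2 ≤ t) :
    prodQ q x z 1 t = prodQ q x z 1 (t - 1) * q (x t, z t) (x (t - 1), z (t - 1)) := by
  simp only [prodQ]
  rw [show t = t - 1 + 1 from by omega, Finset.prod_Ioc_succ_top (by omega : 1 ≤ t - 1)]
  simp [Nat.add_sub_cancel]

/-- if the observation `x_t` satisfies the one-step barrier inequality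
for the state `i`, then `t` is an `i`-node of order 1 for `x_{1:t+1}`. -/
theorem isNode_of_barrier_ineq (q : 𝒳 × 𝒴 → 𝒳 × 𝒴 → ℝ) (p1 : 𝒳 × 𝒴 → ℝ)
    (hq : ∀ z z' : 𝒳 × 𝒴, 0 ≤ q z z') (hp1 : ∀ z : 𝒳 × 𝒴, 0 ≤ p1 z)
    (x : ℕ → 𝒳) (t : ℕ) (ht : 2 ≤ t) (i : 𝒴)
    (hbar : ∀ a b c : 𝒴,
      q (x t, b) (x (t - 1), a) * q (x (t + 1), c) (x t, b) ≤
        q (x t, i) (x (t - 1), a) * q (x (t + 1), c) (x t, i)) :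
    ∀ j k : 𝒴, delta q p1 x t k * pTrans q x t (t + 1) k j ≤
      delta q p1 x t i * pTrans q x t (t + 1) i j := by
  intro j k
  rw [pTrans_succ q hq, pTrans_succ q hq]
  set ck := q (x (t + 1), j) (x t, k) with hck
  set ci := q (x (t + 1), j) (x t, i) with hci
  have ht1 : 1 ≤ t := by omega
  obtain ⟨M0, hM0⟩ := pJoint_bdd q p1 x ht1
  set M := max M0 0 with hM
  have hfM : ∀ y : ℕ → 𝒴, pJoint q p1 x y t ≤ M := fun y =>
    le_trans (hM0 ⟨y, rfl⟩) (le_max_left _ _)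
  have hgM : ∀ (a : 𝒴) (y : ℕ → 𝒴),
      (⨆ (_ : y t = a), pJoint q p1 x y t) ≤ M := by
    intro a y
    by_cases h : y t = a
    · rw [ciSup_pos h]; exact hfM y
    · haveI : IsEmpty (y t = a) := ⟨h⟩
      rw [Real.iSup_of_isEmpty]; exact le_max_right _ _
  have hbdd : ∀ a : 𝒴, BddAbove (Set.range fun y : ℕ → 𝒴 =>
      ⨆ (_ : y t = a), pJoint q p1 x y t) := fun a =>
    ⟨M, by rintro _ ⟨y, rfl⟩; exact hgM a y⟩
  have hle_delta : ∀ (a : 𝒴) (y : ℕ → 𝒴), y t = a →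
      pJoint q p1 x y t ≤ delta q p1 x t a := by
    intro a y hy
    rw [show pJoint q p1 x y t = ⨆ (_ : y t = a), pJoint q p1 x y t from (ciSup_pos (f := fun _ => pJoint q p1 x y t) hy).symm]
    exact le_ciSup (hbdd a) y
  have hdelta_nonneg : 0 ≤ delta q p1 x t i :=
    le_trans (pJoint_nonneg q p1 hq hp1 x (fun _ => i) t) (hle_delta i (fun _ => i) rfl)
  have hD : 0 ≤ delta q p1 x t i * ci := mul_nonneg hdelta_nonneg (hq _ _)
  have key : ∀ y : ℕ → 𝒴, y t = k →
      pJoint q p1 x y t * ck ≤ delta q p1 x t i * ci := by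
    intro y hy
    set y' : ℕ → 𝒴 := Function.update y t i with hy'
    have hA : 0 ≤ p1 (x 1, y 1) * prodQ q x y 1 (t - 1) :=
      mul_nonneg (hp1 _) (Finset.prod_nonneg fun _ _ => hq _ _)
    have hy'1 : y' 1 = y 1 := Function.update_of_ne (by omega) _ _
    have hy't : y' t = i := Function.update_self _ _ _
    have hy'tm : y' (t - 1) = y (t - 1) := Function.update_of_ne (by omega) _ _
    have hprod : prodQ q x y' 1 (t - 1) = prodQ q x y 1 (t - 1) :=
      prodQ_congr_s3 q x fun s hs => Function.update_of_ne (by omega) _ _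
    have h1 : pJoint q p1 x y t * ck =
        (p1 (x 1, y 1) * prodQ q x y 1 (t - 1)) *
          (q (x t, k) (x (t - 1), y (t - 1)) * ck) := by
      rw [pJoint, prodQ_split_top q x y ht, hy]; ring
    have h2 : pJoint q p1 x y' t =
        (p1 (x 1, y 1) * prodQ q x y 1 (t - 1)) *
          q (x t, i) (x (t - 1), y (t - 1)) := by
      rw [pJoint, prodQ_split_top q x y' ht, hy'1, hy't, hy'tm, hprod]; ring
    calc pJoint q p1 x y t * ck
        = (p1 (x 1, y 1) * prodQ q x y 1 (t - 1)) *
            (q (x t, k) (x (t - 1), y (t - 1)) * ck) := h1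
      _ ≤ (p1 (x 1, y 1) * prodQ q x y 1 (t - 1)) *
            (q (x t, i) (x (t - 1), y (t - 1)) * ci) :=
          mul_le_mul_of_nonneg_left (hbar (y (t - 1)) k j) hA
      _ = pJoint q p1 x y' t * ci := by rw [h2]; ring
      _ ≤ delta q p1 x t i * ci :=
          mul_le_mul_of_nonneg_right (hle_delta i y' hy't) (hq _ _)
  calc delta q p1 x t k * ck
      = ⨆ y : ℕ → 𝒴, (⨆ (_ : y t = k), pJoint q p1 x y t) * ck :=
        Real.iSup_mul_of_nonneg (hq _ _) _
    _ ≤ delta q p1 x t i * ci := by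
        refine Real.iSup_le (fun y => ?_) hD
        by_cases h : y t = k
        · rw [ciSup_pos h]; exact key y h
        · haveI : IsEmpty (y t = k) := ⟨h⟩
          rw [Real.iSup_of_isEmpty, zero_mul]; exact hD


end PMMViterbi
end
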